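/- (Corollary 2.6, homoclinic case) Assume G is conserved by X. If a differentiable curve x : ℝ → E solves the geometrically dissipated system and there exists a point x_e ∈ E with x(t) → x_e both as t → +∞ and as t → −∞, then x(t) ∈ Inv for all t ∈ ℝ and x is also a solution of the unperturbed system, i.e. x′(t) = X(x(t)) for all t ∈ ℝ. -/

import Mathlib

open scoped RealInnerProductSpace BigOperators
open Filter Topology

/-!
Expanding along the last row, `⟪y, v₀(w, u)⟫` is the determinant of `Σ^{(w, y)}_{(w, u)}`.
Hence `v₀` is orthogonal to every `wᵢ`, `‖v₀‖² = det Σ^{w}_{w} · det Σ^{(w,u)}_{(w,u)}`, and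
`⟪∇G, v₀⟫` is the Gram determinant `D ≥ 0` defining `Inv`. Since `X` conserves `G`, along a
solution `(G ∘ x)' = -D(x) ≤ 0`, so `G ∘ x` is antitone; having the same limit `G(x_e)` at both
ends it is constant. Then `D(x t) = 0`, so `v₀(x t) = 0` and `x` solves `x' = X(x)`.
-/

/-- `Σ^{(a₁,…,a_r)}_{(b₁,…,b_s)}`: the `r × s` real matrix whose `(i,j)` entry is `⟪b j, a i⟫`. -/
noncomputable def sigmaMat {E : Type*} [NormedAddCommGroup E] [InnerProductSpace ℝ E]
    {r s : ℕ} (a : Fin r → E) (b : Fin s → E) : Matrix (Fin r) (Fin s) ℝ :=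
  Matrix.of fun i j => ⟪b j, a i⟫

/-- The standard control vector `v₀(w₁,…,w_{k+1},u)`: there are `k+1` vectors `w`
(`k+1 ≥ 1` encodes the requirement that the number of `w`-vectors is at least one).
With `0`-indexing, the sign `(-1)^(i+k+1)` below is the paper's `(-1)^{i+k+1}` for
`1`-indexed `i` and `k+1` vectors. -/
noncomputable def stdControl {E : Type*} [NormedAddCommGroup E] [InnerProductSpace ℝ E]
    {k : ℕ} (w : Fin (k + 1) → E) (u : E) : E :=
  (∑ i : Fin (k + 1),
      ((-1 : ℝ) ^ ((i : ℕ) + k + 1) *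
        (sigmaMat w (Fin.snoc (w ∘ i.succAbove) u)).det) • w i) +
    (sigmaMat w w).det • u

/-- The family of gradients `(∇F₁(x),…,∇F_{k+1}(x),∇G(x))`. -/
noncomputable def gradFam {E : Type*} [NormedAddCommGroup E] [InnerProductSpace ℝ E]
    [FiniteDimensional ℝ E] {k : ℕ} (F : Fin (k + 1) → E → ℝ) (G : E → ℝ) (x : E) :
    Fin (k + 1 + 1) → E :=
  Fin.snoc (fun i => gradient (F i) x) (gradient G x)

/-- The standard control vector field `x ↦ v₀(∇F₁(x),…,∇F_{k+1}(x),∇G(x))`. -/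
noncomputable def v0Field {E : Type*} [NormedAddCommGroup E] [InnerProductSpace ℝ E]
    [FiniteDimensional ℝ E] {k : ℕ} (F : Fin (k + 1) → E → ℝ) (G : E → ℝ) (x : E) : E :=
  stdControl (fun i => gradient (F i) x) (gradient G x)

/-- `det Σ^{(∇F₁(x),…,∇F_{k+1}(x),∇G(x))}_{(∇F₁(x),…,∇F_{k+1}(x),∇G(x))}`. -/
noncomputable def gramDetFG {E : Type*} [NormedAddCommGroup E] [InnerProductSpace ℝ E]
    [FiniteDimensional ℝ E] {k : ℕ} (F : Fin (k + 1) → E → ℝ) (G : E → ℝ) (x : E) : ℝ :=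
  (sigmaMat (gradFam F G x) (gradFam F G x)).det

/-- The set `Inv = {x | det Σ^{(∇F(x),∇G(x))}_{(∇F(x),∇G(x))} = 0}`. -/
def invSet {E : Type*} [NormedAddCommGroup E] [InnerProductSpace ℝ E]
    [FiniteDimensional ℝ E] {k : ℕ} (F : Fin (k + 1) → E → ℝ) (G : E → ℝ) : Set E :=
  {x | gramDetFG F G x = 0}

lemma Fin.snoc_comp_castSucc_succAbove {α : Type*} {k : ℕ} (w : Fin (k + 1) → α) (u : α)
    (i : Fin (k + 1)) :
    (Fin.snoc w u : Fin (k + 2) → α) ∘ i.castSucc.succAbove = Fin.snoc (w ∘ i.succAbove) u := by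
  funext q
  refine Fin.lastCases ?_ (fun q' => ?_) q
  · have h : i.castSucc.succAbove (Fin.last k) = Fin.last (k + 1) := by
      rw [Fin.succAbove_of_le_castSucc _ _ (Fin.castSucc_le_castSucc_iff.mpr (Fin.le_last i)),
        Fin.succ_last]
    simp [h]
  · simp [Fin.castSucc_succAbove_castSucc]

lemma Antitone.eq_of_tendsto_atTop_of_tendsto_atBot {α β : Type*} [LinearOrder α] [Nonempty α]
    [TopologicalSpace β] [PartialOrder β] [OrderClosedTopology β] {f : α → β} {b : β}
    (hf : Antitone f) (htop : Tendsto f atTop (𝓝 b)) (hbot : Tendsto f atBot (𝓝 b)) (t : α) :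
    f t = b :=
  le_antisymm (_root_.ge_of_tendsto hbot ((eventually_le_atBot t).mono fun _ hs => hf hs))
    (_root_.le_of_tendsto htop ((eventually_ge_atTop t).mono fun _ hs => hf hs))

section StdControl

variable {E : Type*} [NormedAddCommGroup E] [InnerProductSpace ℝ E]

lemma sigmaMat_self_eq_gram {m : ℕ} (c : Fin m → E) : sigmaMat c c = Matrix.gram ℝ c := by
  ext i j
  exact real_inner_comm _ _

lemma det_sigmaMat_self_nonneg {m : ℕ} (c : Fin m → E) : 0 ≤ (sigmaMat c c).det := by
  rw [sigmaMat_self_eq_gram]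
  exact (Matrix.posSemidef_gram ℝ c).det_nonneg

lemma inner_stdControl {k : ℕ} (w : Fin (k + 1) → E) (u y : E) :
    ⟪y, stdControl w u⟫ = (sigmaMat (Fin.snoc w y) (Fin.snoc w u)).det := by
  rw [Matrix.det_succ_row _ (Fin.last (k + 1)), Fin.sum_univ_castSucc, stdControl,
    inner_add_right, inner_sum]
  simp only [Fin.succAbove_last]
  congr 1
  · refine Finset.sum_congr rfl fun i _ => ?_
    have hminor : (sigmaMat (Fin.snoc w y) (Fin.snoc w u)).submatrix Fin.castSucc
        i.castSucc.succAbove = sigmaMat w (Fin.snoc (w ∘ i.succAbove) u) := by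
      ext p q
      simp only [Matrix.submatrix_apply, sigmaMat, Matrix.of_apply, Fin.snoc_castSucc,
        ← Fin.snoc_comp_castSucc_succAbove w u i, Function.comp_apply]
    rw [real_inner_smul_right, hminor]
    simp only [sigmaMat, Matrix.of_apply, Fin.snoc_castSucc, Fin.snoc_last, Fin.val_castSucc,
      Fin.val_last, real_inner_comm (w i) y]
    rw [show k + 1 + (i : ℕ) = i + k + 1 by omega]
    ring
  · have hminor : (sigmaMat (Fin.snoc w y) (Fin.snoc w u)).submatrix Fin.castSucc
        Fin.castSucc = sigmaMat w w := by
      ext p q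
      simp [sigmaMat]
    rw [real_inner_smul_right, hminor]
    simp only [sigmaMat, Matrix.of_apply, Fin.snoc_last, Fin.val_last, real_inner_comm u y,
      Even.neg_one_pow ⟨k + 1, rfl⟩]
    ring

lemma inner_stdControl_eq_zero {k : ℕ} (w : Fin (k + 1) → E) (u : E) (j : Fin (k + 1)) :
    ⟪w j, stdControl w u⟫ = 0 := by
  rw [inner_stdControl]
  refine Matrix.det_zero_of_row_eq (Fin.castSucc_lt_last j).ne ?_
  funext q
  simp [sigmaMat]

lemma inner_stdControl_self {k : ℕ} (w : Fin (k + 1) → E) (u : E) :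
    ⟪stdControl w u, stdControl w u⟫ =
      (sigmaMat w w).det * (sigmaMat (Fin.snoc w u) (Fin.snoc w u)).det := by
  conv_lhs => arg 2; rw [stdControl]
  simp only [inner_add_left, sum_inner, real_inner_smul_left, inner_stdControl_eq_zero,
    mul_zero, Finset.sum_const_zero, zero_add]
  rw [inner_stdControl]

lemma stdControl_eq_zero_of_det_eq_zero {k : ℕ} (w : Fin (k + 1) → E) (u : E)
    (hD : (sigmaMat (Fin.snoc w u) (Fin.snoc w u)).det = 0) : stdControl w u = 0 :=
  inner_self_eq_zero.mp (by rw [inner_stdControl_self, hD, mul_zero])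

end StdControl

section Dissipation

variable {E : Type*} [NormedAddCommGroup E] [InnerProductSpace ℝ E] [FiniteDimensional ℝ E]
  {k : ℕ} (F : Fin (k + 1) → E → ℝ) (G : E → ℝ)

lemma inner_gradient_v0Field (y : E) : ⟪gradient G y, v0Field F G y⟫ = gramDetFG F G y :=
  inner_stdControl _ _ _

lemma gramDetFG_nonneg (y : E) : 0 ≤ gramDetFG F G y :=
  det_sigmaMat_self_nonneg _

lemma hasDerivAt_comp_of_dissipated {X : E → E} (hG : Differentiable ℝ G)
    (hcons : ∀ y : E, ⟪gradient G y, X y⟫ = 0) {x : ℝ → E} {t : ℝ}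
    (hx : HasDerivAt x (X (x t) - v0Field F G (x t)) t) :
    HasDerivAt (G ∘ x) (-gramDetFG F G (x t)) t := by
  have h := (hG (x t)).hasGradientAt.hasFDerivAt.comp_hasDerivAt t hx
  rwa [InnerProductSpace.toDual_apply_apply, inner_sub_right, hcons, inner_gradient_v0Field,
    zero_sub] at h

end Dissipation

theorem homoclinic_solution_mem_inv_and_unperturbed_general
    {E : Type*} [NormedAddCommGroup E] [InnerProductSpace ℝ E]
    [FiniteDimensional ℝ E] {k : ℕ} (F : Fin (k + 1) → E → ℝ) (G : E → ℝ) (X : E → E)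
    (hG : ContDiff ℝ 1 G)
    (hcons : ∀ y : E, ⟪gradient G y, X y⟫ = 0)
    (x : ℝ → E) (hx : ∀ t : ℝ, HasDerivAt x (X (x t) - v0Field F G (x t)) t)
    (x_e : E) (htop : Tendsto x atTop (𝓝 x_e)) (hbot : Tendsto x atBot (𝓝 x_e)) :
    (∀ t : ℝ, x t ∈ invSet F G) ∧ ∀ t : ℝ, HasDerivAt x (X (x t)) t := by
  have hGx t := hasDerivAt_comp_of_dissipated F G (hG.differentiable one_ne_zero) hcons (hx t)
  have hanti : Antitone (G ∘ x) :=
    antitone_of_hasDerivAt_nonpos hGx fun t => neg_nonpos.mpr (gramDetFG_nonneg F G (x t))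
  have hconst : G ∘ x = fun _ => G x_e := funext <|
    hanti.eq_of_tendsto_atTop_of_tendsto_atBot ((hG.continuous.tendsto x_e).comp htop)
      ((hG.continuous.tendsto x_e).comp hbot)
  have hmem (t : ℝ) : gramDetFG F G (x t) = 0 := by
    have h := (hGx t).unique (hconst ▸ hasDerivAt_const t (G x_e))
    linarith
  refine ⟨hmem, fun t => ?_⟩
  simpa [v0Field, stdControl_eq_zero_of_det_eq_zero _ _ (hmem t)] using hx t

/-- Corollary 2.6, homoclinic case: a solution of the geometrically dissipated
system converging to the same point `x_e` as `t → ±∞` is contained in `Inv` and is also a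
solution of the unperturbed system. -/
theorem homoclinic_solution_mem_inv_and_unperturbed
    {E : Type*} [NormedAddCommGroup E] [InnerProductSpace ℝ E]
    [FiniteDimensional ℝ E] {k : ℕ} (F : Fin (k + 1) → E → ℝ) (G : E → ℝ) (X : E → E)
    (hF : ∀ i, ContDiff ℝ 1 (F i)) (hG : ContDiff ℝ 1 G)
    (hcons : ∀ y : E, ⟪gradient G y, X y⟫ = 0)
    (x : ℝ → E) (hx : ∀ t : ℝ, HasDerivAt x (X (x t) - v0Field F G (x t)) t)
    (x_e : E) (htop : Tendsto x atTop (𝓝 x_e)) (hbot : Tendsto x atBot (𝓝 x_e)) :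
    (∀ t : ℝ, x t ∈ invSet F G) ∧ ∀ t : ℝ, HasDerivAt x (X (x t)) t :=
  homoclinic_solution_mem_inv_and_unperturbed_general F G X hG hcons x hx x_e htop hbot
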